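/- Let I be a good ideal in K[x_1,…,x_n]. Then for every nonnegative integer t, I_{t+1,0,…,0} = (I_{t,0,…,0}·I) : ⟨μ_1⟩. -/

import Mathlib

open MvPolynomial

namespace GasanovaRR

/-- The monomial `x^α` in `K[x_1,…,x_n]`. -/
noncomputable def mono (K : Type*) [Field K] {n : ℕ} (α : Fin n → ℕ) :
    MvPolynomial (Fin n) K :=
  MvPolynomial.monomial (Finsupp.equivFunOnFinite.symm α) 1

/-- `I` is a monomial ideal: it is generated by a set of monomials. -/
def IsMonomialIdeal {K : Type*} [Field K] {n : ℕ}
    (I : Ideal (MvPolynomial (Fin n) K)) : Prop :=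
  ∃ A : Set (Fin n → ℕ), I = Ideal.span (mono K '' A)

/-- `x^α` is a minimal monomial generator of `I`, i.e. `x^α ∈ G(I)`:
`x^α ∈ I` and no monomial in `I` strictly divides it. -/
def IsMinGen {K : Type*} [Field K] {n : ℕ}
    (I : Ideal (MvPolynomial (Fin n) K)) (α : Fin n → ℕ) : Prop :=
  mono K α ∈ I ∧ ∀ β : Fin n → ℕ, mono K β ∈ I → β ≤ α → β = α

/-- The point `α` lies in the box `B_{a_1,…,a_n}` (for box sizes `d_1,…,d_n`). -/
def InBox {n : ℕ} (d a α : Fin n → ℕ) : Prop :=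
  ∀ i, a i * d i ≤ α i ∧ α i ≤ (a i + 1) * d i

/-- `I` is a good ideal (w.r.t. box sizes `d`): for every `l ≥ 1`, every minimal
generator of `I^l` lies in a box whose coordinate sum is `l - 1`. -/
def IsGood {K : Type*} [Field K] {n : ℕ}
    (I : Ideal (MvPolynomial (Fin n) K)) (d : Fin n → ℕ) : Prop :=
  ∀ l : ℕ, 1 ≤ l → ∀ α : Fin n → ℕ, IsMinGen (I ^ l) α →
    ∃ a : Fin n → ℕ, InBox d a α ∧ ∑ i, a i = l - 1

/-- `I` is an `𝔪`-primary monomial ideal whose minimal generating set contains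
`μ_i = x_i^{d_i}` with `d_i > 0` for each `i`. -/
def MPrimaryWithCorners {K : Type*} [Field K] {n : ℕ}
    (I : Ideal (MvPolynomial (Fin n) K)) (d : Fin n → ℕ) : Prop :=
  IsMonomialIdeal I ∧ I ≠ ⊤ ∧ (∀ i, 0 < d i) ∧ ∀ i, IsMinGen I (Pi.single i (d i))

/-- The ideal `I_{a_1,…,a_n}` associated to the box `B_{a_1,…,a_n}`, generated by
`m / (μ_1^{a_1}⋯μ_n^{a_n})` for `m ∈ B_{a_1,…,a_n} ∩ G(I^l)`, `l = a_1+⋯+a_n+1`. -/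
noncomputable def boxIdeal {K : Type*} [Field K] {n : ℕ}
    (I : Ideal (MvPolynomial (Fin n) K)) (d a : Fin n → ℕ) :
    Ideal (MvPolynomial (Fin n) K) :=
  Ideal.span ((fun α => mono K (α - fun i => a i * d i)) ''
    {α | InBox d a α ∧ IsMinGen (I ^ (∑ i, a i + 1)) α})

/-- The Ratliff–Rush closure `Ĩ = ⋃_{k ≥ 0} (I^{k+1} : I^k)`. -/
noncomputable def ratliffRush {K : Type*} [Field K] {n : ℕ}
    (I : Ideal (MvPolynomial (Fin n) K)) : Ideal (MvPolynomial (Fin n) K) :=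
  ⨆ k : ℕ, (I ^ (k + 1)).colon ((↑(I ^ k : Ideal (MvPolynomial (Fin n) K))) : Set (MvPolynomial (Fin n) K))

/-- The cone in `ℕ^n` with set `S` of fixed coordinates and vertex `v`. -/
def Cone {n : ℕ} (S : Set (Fin n)) (v : Fin n → ℕ) : Set (Fin n → ℕ) :=
  {b | (∀ i ∈ S, b i = v i) ∧ ∀ i ∉ S, v i ≤ b i}

/-- `I` is a very good ideal: it is good and `I_{a_1,…,a_n} = I` for all boxes. -/
def IsVeryGood {K : Type*} [Field K] {n : ℕ}
    (I : Ideal (MvPolynomial (Fin n) K)) (d : Fin n → ℕ) : Prop :=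
  IsGood I d ∧ ∀ a : Fin n → ℕ, boxIdeal I d a = I

/-!
Exponent vectors stand for monomials, and membership in a monomial ideal is read off the
support. For `⊆`, a minimal generator `α` of `I^(t+2)` in the box `B_{(t+1)e₁}` splits as
`g + u` with `g ∈ G(I)` and `u ∈ G(I^(t+1))`; since `g ≤ d`, `u` lies in `B_{te₁}`, and
`x^(α - (t+1)d₁e₁) · μ₁ = x^(u - td₁e₁) · x^g`.

For `⊇`, if `x^s · μ₁ ∈ I_{te₁} · I` then `x^(s + (t+1)d₁e₁) ∈ I^(t+2)`, and it suffices that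
such a monomial is divisible by a minimal generator of `I^(t+2)` in `B_{(t+1)e₁}`. If all its
other exponents are below the corresponding `dᵢ`, goodness puts any minimal generator dividing
it into that box. Otherwise `μ₁^(t+1) μⱼ` divides it, and this monomial is a minimal generator
because every monomial of `I^l` has weighted degree `∑ αᵢ / dᵢ ≥ l`: goodness of `I^(lN)`
gives `N · deg ≥ lN - 1` for all `N`.
-/

section Monomials

variable {K : Type*} [Field K] {n : ℕ}

lemma mono_mul (a b : Fin n → ℕ) : mono K a * mono K b = mono K (a + b) := by
  simp only [mono, monomial_mul, mul_one]
  congr 2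
  exact Finsupp.ext fun _ => rfl

lemma mono_pow (a : Fin n → ℕ) (N : ℕ) : mono K a ^ N = mono K (N • a) := by
  simp only [mono, monomial_pow, one_pow]
  congr 2
  exact Finsupp.ext fun _ => rfl

lemma mono_zero : mono K (0 : Fin n → ℕ) = 1 := by
  rw [mono, ← C_1, ← monomial_zero']
  congr 2
  exact Finsupp.ext fun _ => rfl

lemma mono_eq_monomial (σ : Fin n →₀ ℕ) : mono K ⇑σ = monomial σ 1 := by
  rw [mono, Finsupp.equivFunOnFinite_symm_coe]

lemma mono_mem_of_le {J : Ideal (MvPolynomial (Fin n) K)} {a b : Fin n → ℕ}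
    (ha : mono K a ∈ J) (hab : a ≤ b) : mono K b ∈ J := by
  rw [← add_tsub_cancel_of_le hab, ← mono_mul]
  exact J.mul_mem_right _ ha

lemma mem_span_mono_iff {S : Set (Fin n → ℕ)} {p : MvPolynomial (Fin n) K} :
    p ∈ Ideal.span (mono K '' S) ↔ ∀ σ ∈ p.support, ∃ s ∈ S, s ≤ ⇑σ := by
  have hS : mono K '' S =
      (fun s => monomial s (1 : K)) '' (Finsupp.equivFunOnFinite.symm '' S) := by
    rw [Set.image_image]; rfl
  rw [hS, mem_ideal_span_monomial_image]
  refine forall₂_congr fun σ _ => ⟨?_, ?_⟩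
  · rintro ⟨_, ⟨s, hs, rfl⟩, hle⟩
    exact ⟨s, hs, fun i => hle i⟩
  · rintro ⟨s, hs, hle⟩
    exact ⟨_, ⟨s, hs, rfl⟩, fun i => hle i⟩

lemma mono_mem_span_mono_iff {S : Set (Fin n → ℕ)} {a : Fin n → ℕ} :
    mono K a ∈ Ideal.span (mono K '' S) ↔ ∃ s ∈ S, s ≤ a := by
  classical
  rw [mem_span_mono_iff, mono, support_monomial, if_neg one_ne_zero]
  simp

lemma span_mono_mul (S T : Set (Fin n → ℕ)) :
    Ideal.span (mono K '' S) * Ideal.span (mono K '' T) =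
      Ideal.span (mono K '' Set.image2 (· + ·) S T) := by
  rw [Ideal.span_mul_span', ← Set.image2_mul, Set.image2_image_left, Set.image2_image_right,
    Set.image_image2]
  simp only [mono_mul]

end Monomials

namespace IsMonomialIdeal

variable {K : Type*} [Field K] {n : ℕ} {I J : Ideal (MvPolynomial (Fin n) K)}

lemma mul (hI : IsMonomialIdeal I) (hJ : IsMonomialIdeal J) : IsMonomialIdeal (I * J) := by
  obtain ⟨S, rfl⟩ := hI
  obtain ⟨T, rfl⟩ := hJ
  exact ⟨_, span_mono_mul S T⟩

lemma pow (hI : IsMonomialIdeal I) (l : ℕ) : IsMonomialIdeal (I ^ l) := by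
  induction l with
  | zero => exact ⟨{0}, by rw [pow_zero, Set.image_singleton, mono_zero, Ideal.one_eq_top,
      Ideal.span_singleton_one]⟩
  | succ l ih => exact pow_succ I l ▸ ih.mul hI

lemma mem_iff_forall_support (hI : IsMonomialIdeal I) {p : MvPolynomial (Fin n) K} :
    p ∈ I ↔ ∀ σ ∈ p.support, mono K ⇑σ ∈ I := by
  refine ⟨fun hp σ hσ => ?_, fun h => ?_⟩
  · obtain ⟨S, rfl⟩ := hI
    obtain ⟨s, hs, hle⟩ := mem_span_mono_iff.1 hp σ hσ
    exact mono_mem_of_le (Ideal.subset_span ⟨s, hs, rfl⟩) hle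
  · rw [← support_sum_monomial_coeff p]
    refine I.sum_mem fun σ hσ => ?_
    rw [← mul_one (coeff σ p), ← C_mul_monomial, ← mono_eq_monomial]
    exact I.mul_mem_left _ (h σ hσ)

lemma exists_add_le_of_mono_mem_mul (hI : IsMonomialIdeal I) (hJ : IsMonomialIdeal J)
    {a : Fin n → ℕ} (ha : mono K a ∈ I * J) :
    ∃ b c, mono K b ∈ I ∧ mono K c ∈ J ∧ b + c ≤ a := by
  obtain ⟨S, rfl⟩ := hI
  obtain ⟨T, rfl⟩ := hJ
  rw [span_mono_mul, mono_mem_span_mono_iff] at ha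
  obtain ⟨_, ⟨b, hb, c, hc, rfl⟩, hle⟩ := ha
  exact ⟨b, c, Ideal.subset_span ⟨b, hb, rfl⟩, Ideal.subset_span ⟨c, hc, rfl⟩, hle⟩

end IsMonomialIdeal

section MinGen

variable {K : Type*} [Field K] {n : ℕ} {I J : Ideal (MvPolynomial (Fin n) K)}

lemma isMinGen_iff_minimal {a : Fin n → ℕ} :
    IsMinGen I a ↔ Minimal (fun b => mono K b ∈ I) a :=
  and_congr_right fun _ => forall_congr' fun _ =>
    ⟨fun h hb hba => (h hb hba).ge, fun h hb hba => le_antisymm hba (h hb hba)⟩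

lemma exists_isMinGen_le {a : Fin n → ℕ} (ha : mono K a ∈ I) : ∃ b, b ≤ a ∧ IsMinGen I b := by
  simp only [isMinGen_iff_minimal]
  exact exists_minimal_le_of_wellFoundedLT _ a ha

lemma IsMinGen.le_of_corners {d a : Fin n → ℕ} (hcorner : ∀ i, mono K (Pi.single i (d i)) ∈ I)
    (ha : IsMinGen I a) : a ≤ d := by
  intro i
  by_contra! hlt
  have hle : Pi.single i (d i) ≤ a := by
    intro j
    rcases eq_or_ne j i with rfl | hji
    · simpa using hlt.le
    · simp [Pi.single_eq_of_ne hji]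
  have := congrFun (ha.2 _ (hcorner i) hle) i
  simp only [Pi.single_eq_same] at this
  exact hlt.ne this

lemma IsMinGen.exists_add_eq (hI : IsMonomialIdeal I) (hJ : IsMonomialIdeal J) {a : Fin n → ℕ}
    (ha : IsMinGen (I * J) a) : ∃ b c, IsMinGen I b ∧ IsMinGen J c ∧ b + c = a := by
  obtain ⟨b', c', hb', hc', hle⟩ := hI.exists_add_le_of_mono_mem_mul hJ ha.1
  obtain ⟨b, hbb', hb⟩ := exists_isMinGen_le hb'
  obtain ⟨c, hcc', hc⟩ := exists_isMinGen_le hc'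
  have hmem : mono K (b + c) ∈ I * J := mono_mul (K := K) b c ▸ Ideal.mul_mem_mul hb.1 hc.1
  exact ⟨b, c, hb, hc, ha.2 _ hmem ((add_le_add hbb' hcc').trans hle)⟩

end MinGen

section WeightedDegree

variable {n : ℕ}

def weightedDeg (d u : Fin n → ℕ) : ℚ := ∑ i, (u i : ℚ) / d i

variable {d : Fin n → ℕ}

lemma weightedDeg_nonneg (u : Fin n → ℕ) : 0 ≤ weightedDeg d u :=
  Finset.sum_nonneg fun _ _ => by positivity

lemma weightedDeg_add (u v : Fin n → ℕ) :
    weightedDeg d (u + v) = weightedDeg d u + weightedDeg d v := by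
  simp only [weightedDeg, Pi.add_apply, Nat.cast_add, add_div, Finset.sum_add_distrib]

lemma weightedDeg_nsmul (N : ℕ) (u : Fin n → ℕ) :
    weightedDeg d (N • u) = N * weightedDeg d u := by
  simp only [weightedDeg, Pi.smul_apply, smul_eq_mul, Nat.cast_mul, mul_div_assoc,
    Finset.mul_sum]

lemma weightedDeg_single (i : Fin n) (c : ℕ) : weightedDeg d (Pi.single i c) = c / d i := by
  classical
  simp [weightedDeg, Pi.single_apply, ite_div]

lemma weightedDeg_strictMono (hd : ∀ i, 0 < d i) : StrictMono (weightedDeg d) := by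
  intro u v huv
  obtain ⟨hle, i, hlt⟩ := Pi.lt_def.1 huv
  refine Finset.sum_lt_sum (fun j _ => ?_) ⟨i, Finset.mem_univ i, ?_⟩
  · gcongr
    exact hle j
  · have := hd i
    gcongr

end WeightedDegree

section Boxes

variable {n : ℕ}

lemma inBox_single_iff (d : Fin n → ℕ) (z : Fin n) (c : ℕ) (a : Fin n → ℕ) :
    InBox d (Pi.single z c) a ↔
      c * d z ≤ a z ∧ a z ≤ (c + 1) * d z ∧ ∀ i ≠ z, a i ≤ d i := by
  refine ⟨fun h => ⟨by simpa using (h z).1, by simpa using (h z).2, fun i hi => ?_⟩,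
    fun ⟨hlo, hhi, hoff⟩ i => ?_⟩
  · simpa [Pi.single_eq_of_ne hi] using (h i).2
  · rcases eq_or_ne i z with rfl | hi
    · simpa using ⟨hlo, hhi⟩
    · simpa [Pi.single_eq_of_ne hi] using hoff i hi

lemma eq_pi_single_of_sum_eq {b : Fin n → ℕ} {z : Fin n} {c : ℕ} (hoff : ∀ i ≠ z, b i = 0)
    (hsum : ∑ i, b i = c) : b = Pi.single z c := by
  rw [Finset.sum_eq_single_of_mem z (Finset.mem_univ z) fun i _ hi => hoff i hi] at hsum
  funext i
  rcases eq_or_ne i z with rfl | hi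
  · simpa using hsum
  · simp [Pi.single_eq_of_ne hi, hoff i hi]

end Boxes

namespace IsGood

variable {K : Type*} [Field K] {n : ℕ} {I : Ideal (MvPolynomial (Fin n) K)} {d : Fin n → ℕ}

lemma exists_inBox (hgood : IsGood I d) {k : ℕ} {a : Fin n → ℕ} (ha : IsMinGen (I ^ (k + 1)) a) :
    ∃ b, InBox d b a ∧ ∑ i, b i = k := by
  simpa using hgood (k + 1) (Nat.le_add_left 1 k) a ha

lemma le_mul_of_isMinGen (hgood : IsGood I d) {k : ℕ} {a : Fin n → ℕ}
    (ha : IsMinGen (I ^ (k + 1)) a) (i : Fin n) : a i ≤ (k + 1) * d i := by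
  obtain ⟨b, hbox, hsum⟩ := hgood.exists_inBox ha
  have hbk : b i ≤ k := hsum ▸ Finset.single_le_sum (fun j _ => Nat.zero_le (b j))
    (Finset.mem_univ i)
  exact (hbox i).2.trans (Nat.mul_le_mul_right _ (Nat.succ_le_succ hbk))

lemma natCast_le_weightedDeg_add_one (hgood : IsGood I d) (hd : ∀ i, 0 < d i) {l : ℕ}
    {u : Fin n → ℕ} (hu : mono K u ∈ I ^ l) : (l : ℚ) ≤ weightedDeg d u + 1 := by
  rcases l with _ | k
  · push_cast
    linarith [weightedDeg_nonneg (d := d) u]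
  obtain ⟨m, hmu, hm⟩ := exists_isMinGen_le hu
  obtain ⟨b, hbox, hsum⟩ := hgood.exists_inBox hm
  calc ((k + 1 : ℕ) : ℚ) = ∑ i, (b i : ℚ) + 1 := by push_cast [← hsum]; rfl
    _ ≤ weightedDeg d m + 1 := by
      rw [weightedDeg]
      gcongr with i
      rw [le_div_iff₀ (by exact_mod_cast hd i)]
      exact_mod_cast (hbox i).1
    _ ≤ weightedDeg d u + 1 := by gcongr; exact (weightedDeg_strictMono hd).monotone hmu

lemma natCast_le_weightedDeg (hgood : IsGood I d) (hd : ∀ i, 0 < d i) {l : ℕ}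
    {u : Fin n → ℕ} (hu : mono K u ∈ I ^ l) : (l : ℚ) ≤ weightedDeg d u := by
  by_contra! hlt
  obtain ⟨N, hN⟩ := exists_nat_gt (1 / (l - weightedDeg d u))
  rw [div_lt_iff₀ (sub_pos.2 hlt)] at hN
  have hpow : mono K (N • u) ∈ I ^ (l * N) := by
    rw [← mono_pow, pow_mul]
    exact Ideal.pow_mem_pow hu N
  have key := hgood.natCast_le_weightedDeg_add_one hd hpow
  rw [weightedDeg_nsmul, Nat.cast_mul] at key
  nlinarith

lemma isMinGen_of_weightedDeg_eq (hgood : IsGood I d) (hd : ∀ i, 0 < d i) {l : ℕ}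
    {u : Fin n → ℕ} (hu : mono K u ∈ I ^ l) (hdeg : weightedDeg d u = l) :
    IsMinGen (I ^ l) u := by
  refine ⟨hu, fun b hb hbu => ?_⟩
  by_contra hne
  have := (weightedDeg_strictMono hd) (lt_of_le_of_ne hbu hne)
  linarith [hgood.natCast_le_weightedDeg hd hb]

lemma exists_isMinGen_inBox_single_le (hgood : IsGood I d) (hd : ∀ i, 0 < d i)
    (hcorner : ∀ i, mono K (Pi.single i (d i)) ∈ I) (z : Fin n) {k : ℕ} {v : Fin n → ℕ}
    (hv : mono K v ∈ I ^ (k + 1)) (hvz : k * d z ≤ v z) :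
    ∃ q, IsMinGen (I ^ (k + 1)) q ∧ InBox d (Pi.single z k) q ∧ q ≤ v := by
  by_cases hbig : ∃ j ≠ z, d j ≤ v j
  · obtain ⟨j, hjz, hj⟩ := hbig
    set q : Fin n → ℕ := Pi.single z (k * d z) + Pi.single j (d j) with hq
    have hq_mem : mono K q ∈ I ^ (k + 1) := by
      have hpow : Pi.single z (k * d z) = k • (Pi.single z (d z) : Fin n → ℕ) := by
        rw [← smul_eq_mul, Pi.single_smul]
      rw [hq, ← mono_mul, hpow, ← mono_pow, pow_succ]
      exact Ideal.mul_mem_mul (Ideal.pow_mem_pow (hcorner z) k) (hcorner j)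
    have hq_deg : weightedDeg d q = (k + 1 : ℕ) := by
      have := hd z
      have := hd j
      rw [hq, weightedDeg_add, weightedDeg_single, weightedDeg_single]
      push_cast
      field_simp
    refine ⟨q, hgood.isMinGen_of_weightedDeg_eq hd hq_mem hq_deg,
      (inBox_single_iff d z k q).2 ⟨?_, ?_, fun i hi => ?_⟩, fun i => ?_⟩
    all_goals
      simp only [hq, Pi.add_apply, Pi.single_apply, add_one_mul]
      split_ifs <;> subst_vars <;> omega
  · push Not at hbig
    obtain ⟨m, hmv, hm⟩ := exists_isMinGen_le hv
    obtain ⟨b, hbox, hsum⟩ := hgood.exists_inBox hm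
    have hoff : ∀ i ≠ z, b i = 0 := fun i hi =>
      Nat.lt_one_iff.1 <| Nat.lt_of_mul_lt_mul_right (a := d i) <| by
        have hbm : b i * d i ≤ m i := (hbox i).1
        have hmv : m i ≤ v i := hmv i
        linarith [hbig i hi]
    exact ⟨m, hm, eq_pi_single_of_sum_eq hoff hsum ▸ hbox, hmv⟩

end IsGood

section BoxIdeal

variable {K : Type*} [Field K] {n : ℕ}

lemma isMonomialIdeal_boxIdeal (I : Ideal (MvPolynomial (Fin n) K)) (d a : Fin n → ℕ) :
    IsMonomialIdeal (boxIdeal I d a) :=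
  ⟨(· - fun i => a i * d i) '' {α | InBox d a α ∧ IsMinGen (I ^ (∑ i, a i + 1)) α}, by
    rw [boxIdeal, Set.image_image]⟩

lemma boxIdeal_single (I : Ideal (MvPolynomial (Fin n) K)) (d : Fin n → ℕ) (z : Fin n)
    (c : ℕ) : boxIdeal I d (Pi.single z c) = Ideal.span (mono K ''
      ((· - Pi.single z (c * d z)) ''
        {a | InBox d (Pi.single z c) a ∧ IsMinGen (I ^ (c + 1)) a})) := by
  have hshift :
      (fun i => (Pi.single z c : Fin n → ℕ) i * d i) = Pi.single z (c * d z) := by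
    funext i
    rcases eq_or_ne i z with rfl | hi <;> simp [Pi.single_eq_of_ne, *]
  rw [boxIdeal, Set.image_image, Finset.sum_pi_single', if_pos (Finset.mem_univ z), hshift]

variable {I : Ideal (MvPolynomial (Fin n) K)} {d : Fin n → ℕ}

lemma boxIdeal_single_succ_le_colon (hI : IsMonomialIdeal I)
    (hcorner : ∀ i, mono K (Pi.single i (d i)) ∈ I) (hgood : IsGood I d) (z : Fin n) (t : ℕ) :
    boxIdeal I d (Pi.single z (t + 1)) ≤
      (boxIdeal I d (Pi.single z t) * I).colon (Ideal.span {mono K (Pi.single z (d z))}) := by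
  rw [boxIdeal_single, Ideal.span_le]
  rintro _ ⟨_, ⟨a, ⟨hbox, hmin⟩, rfl⟩, rfl⟩
  rw [SetLike.mem_coe, Ideal.mem_colon_span_singleton]
  rw [pow_succ'] at hmin
  obtain ⟨g, u, hg, hu, rfl⟩ := hmin.exists_add_eq hI (hI.pow _)
  have hgd := hg.le_of_corners hcorner
  obtain ⟨hlo, -, hoff⟩ := (inBox_single_iff d z _ _).1 hbox
  simp only [Pi.add_apply, add_one_mul] at hlo hoff
  have hgz : g z ≤ d z := hgd z
  have hulo : t * d z ≤ u z := by omega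
  have hubox : InBox d (Pi.single z t) u :=
    (inBox_single_iff d z t u).2
      ⟨hulo, hgood.le_mul_of_isMinGen hu z, fun i hi => by linarith [hoff i hi]⟩
  have hgen : mono K (u - Pi.single z (t * d z)) ∈ boxIdeal I d (Pi.single z t) := by
    rw [boxIdeal_single]
    exact Ideal.subset_span ⟨_, ⟨u, ⟨hubox, hu⟩, rfl⟩, rfl⟩
  have hexp : g + u - Pi.single z ((t + 1) * d z) + Pi.single z (d z) =
      u - Pi.single z (t * d z) + g := by
    funext i
    rcases eq_or_ne i z with rfl | hi
    · simp only [Pi.add_apply, Pi.sub_apply, Pi.single_eq_same, add_one_mul]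
      omega
    · simp [Pi.single_eq_of_ne hi, add_comm]
  rw [mono_mul, hexp, ← mono_mul]
  exact Ideal.mul_mem_mul hgen hg.1

lemma mono_mem_boxIdeal_single_succ (hI : IsMonomialIdeal I) (hd : ∀ i, 0 < d i)
    (hcorner : ∀ i, mono K (Pi.single i (d i)) ∈ I) (hgood : IsGood I d) (z : Fin n) (t : ℕ)
    {s : Fin n → ℕ}
    (hs : mono K (s + Pi.single z (d z)) ∈ boxIdeal I d (Pi.single z t) * I) :
    mono K s ∈ boxIdeal I d (Pi.single z (t + 1)) := by
  obtain ⟨b, c, hb, hc, hbc⟩ :=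
    (isMonomialIdeal_boxIdeal I d _).exists_add_le_of_mono_mem_mul hI hs
  rw [boxIdeal_single, mono_mem_span_mono_iff] at hb
  obtain ⟨_, ⟨a, ⟨hbox, ha⟩, rfl⟩, hab⟩ := hb
  have haz : t * d z ≤ a z := ((inBox_single_iff d z t a).1 hbox).1
  set v := s + Pi.single z ((t + 1) * d z) with hv
  have hacv : a + c ≤ v := by
    intro i
    have hbc := hbc i
    have hab := hab i
    rcases eq_or_ne i z with rfl | hi
    · simp only [hv, Pi.add_apply, Pi.sub_apply, Pi.single_eq_same, add_one_mul] at hbc hab ⊢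
      omega
    · simp only [hv, Pi.add_apply, Pi.sub_apply, Pi.single_eq_of_ne hi] at hbc hab ⊢
      omega
  have hv_mem : mono K v ∈ I ^ (t + 1 + 1) := by
    refine mono_mem_of_le ?_ hacv
    rw [← mono_mul, pow_succ]
    exact Ideal.mul_mem_mul ha.1 hc
  obtain ⟨q, hq, hqbox, hqv⟩ :=
    hgood.exists_isMinGen_inBox_single_le hd hcorner z hv_mem (by simp [hv])
  rw [boxIdeal_single, mono_mem_span_mono_iff]
  refine ⟨_, ⟨q, ⟨hqbox, hq⟩, rfl⟩, fun i => ?_⟩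
  have hqv := hqv i
  simp only [hv, Pi.add_apply] at hqv
  simp only [Pi.sub_apply]
  omega

lemma colon_le_boxIdeal_single_succ (hI : IsMonomialIdeal I) (hd : ∀ i, 0 < d i)
    (hcorner : ∀ i, mono K (Pi.single i (d i)) ∈ I) (hgood : IsGood I d) (z : Fin n) (t : ℕ) :
    (boxIdeal I d (Pi.single z t) * I).colon (Ideal.span {mono K (Pi.single z (d z))}) ≤
      boxIdeal I d (Pi.single z (t + 1)) := by
  intro p hp
  rw [Ideal.mem_colon_span_singleton,
    ((isMonomialIdeal_boxIdeal I d _).mul hI).mem_iff_forall_support] at hp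
  rw [(isMonomialIdeal_boxIdeal I d _).mem_iff_forall_support]
  intro σ hσ
  refine mono_mem_boxIdeal_single_succ hI hd hcorner hgood z t ?_
  have hshift : σ + Finsupp.equivFunOnFinite.symm (Pi.single z (d z)) ∈
      (p * mono K (Pi.single z (d z))).support := by
    rw [mem_support_iff, mono, coeff_mul_monomial, mul_one]
    exact mem_support_iff.1 hσ
  simpa [Finsupp.single_eq_pi_single] using hp _ hshift

end BoxIdeal

/-- Lemma 7.1: for a good ideal `I` and every `t ≥ 0`,
`I_{t+1,0,…,0} = (I_{t,0,…,0} · I) : ⟨μ_1⟩`. -/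
theorem boxIdeal_succ_eq {K : Type*} [Field K] {n : ℕ}
    (I : Ideal (MvPolynomial (Fin n) K)) (d : Fin n → ℕ)
    (hI : MPrimaryWithCorners I d) (hgood : IsGood I d) (hn : 0 < n) (t : ℕ) :
    boxIdeal I d (Pi.single (⟨0, hn⟩ : Fin n) (t + 1)) =
      (boxIdeal I d (Pi.single (⟨0, hn⟩ : Fin n) t) * I).colon
        (Ideal.span {mono K (Pi.single (⟨0, hn⟩ : Fin n) (d ⟨0, hn⟩))}) := by
  obtain ⟨hmono, -, hd, hmin⟩ := hI
  have hcorner : ∀ i, mono K (Pi.single i (d i)) ∈ I := fun i => (hmin i).1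
  exact le_antisymm (boxIdeal_single_succ_le_colon hmono hcorner hgood _ t)
    (colon_le_boxIdeal_single_succ hmono hd hcorner hgood _ t)

end GasanovaRR
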